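/- If (γ_n) converges weakly to γ in L²((−T, T); ℝ), i.e. ∫_{−T}^{T} γ_n(s)·g(s) ds → ∫_{−T}^{T} γ(s)·g(s) ds for every g ∈ L²((−T, T); ℝ), then b_{γ_n} converges to b_γ strongly in L²((0, T)), that is, ∫_0^T |b_{γ_n}(t) − b_γ(t)|² dt → 0; moreover the derivatives also converge: ∫_0^T |b_{γ_n}′(t) − b_γ′(t)|² dt → 0. -/

import Mathlib

open MeasureTheory Filter

/-- The mollifier `ρ_ε(t) = (c/ε)·exp(t²/(t² − ε²))` for `|t| < ε`, and `0` otherwise. -/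
noncomputable def rho (c ε t : ℝ) : ℝ :=
  if |t| < ε then (c / ε) * Real.exp (t ^ 2 / (t ^ 2 - ε ^ 2)) else 0

/-- `b_γ(t) = ∫_{−T}^{T} ρ_ε(t − ε − s)·γ(s) ds`, the time-averaged collector temperature. -/
noncomputable def bgam (c ε T : ℝ) (γ : ℝ → ℝ) (t : ℝ) : ℝ :=
  ∫ s in (-T)..T, rho c ε (t - ε - s) * γ s

/-
Weakly convergent sequences in a Hilbert space are bounded (uniform boundedness principle). For
fixed `t`, `b_{γₙ}(t) - b_γ(t)` is the `L²(-T, T)` pairing of `γₙ - γ` with the bounded function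
`s ↦ ρ_ε(t - ε - s)`, so it tends to `0` pointwise and is bounded uniformly in `n` and `t`; bounded
convergence on `(0, T)` gives `b_{γₙ} → b_γ` in `L²(0, T)`. Since `ρ_ε` is a rescaled smooth
bump function, `b_γ` may be differentiated under the integral sign, `b_γ'` is the same
construction with `ρ_ε'` in place of `ρ_ε`, and the same argument applies.
-/

open Set Topology Function
open scoped InnerProductSpace ENNReal

theorem exists_norm_le_of_tendsto_inner {𝕜 E : Type*} [RCLike 𝕜] [NormedAddCommGroup E]
    [InnerProductSpace 𝕜 E] [CompleteSpace E] {u : ℕ → E} {v : E}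
    (h : ∀ w, Tendsto (fun n => ⟪u n, w⟫_𝕜) atTop (𝓝 ⟪v, w⟫_𝕜)) : ∃ C, ∀ n, ‖u n‖ ≤ C := by
  obtain ⟨C, hC⟩ := banach_steinhaus (g := fun n => innerSL 𝕜 (u n)) fun w => by
    obtain ⟨C, hC⟩ := (h w).norm.bddAbove_range
    exact ⟨C, fun n => by simpa only [innerSL_apply_apply] using hC (mem_range_self n)⟩
  exact ⟨C, fun n => by simpa only [innerSL_apply_norm] using hC n⟩

section Kernel

variable {α β : Type*} [MeasurableSpace α] [MeasurableSpace β] {μ : Measure α} {ν : Measure β}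

theorem MemLp.inner_toLp_eq_integral {f : α → ℝ} (hf : MemLp f 2 μ) (w : Lp ℝ 2 μ) :
    ⟪hf.toLp f, w⟫_ℝ = ∫ s, f s * w s ∂μ := by
  rw [L2.inner_def]
  refine integral_congr_ae ?_
  filter_upwards [hf.coeFn_toLp] with s hs
  simp [hs, mul_comm]

theorem tendsto_integral_sq_integral_kernel_mul_sub [IsFiniteMeasure μ] [IsFiniteMeasure ν]
    {K : β → α → ℝ} (hK : Measurable (uncurry K)) {M : ℝ} (hKM : ∀ t s, |K t s| ≤ M)
    {f : ℕ → α → ℝ} {g : α → ℝ} (hf : ∀ n, MemLp (f n) 2 μ) (hg : MemLp g 2 μ)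
    (hweak : ∀ φ, MemLp φ 2 μ →
      Tendsto (fun n => ∫ s, f n s * φ s ∂μ) atTop (𝓝 (∫ s, g s * φ s ∂μ))) :
    Tendsto (fun n => ∫ t, |∫ s, K t s * f n s ∂μ - ∫ s, K t s * g s ∂μ| ^ 2 ∂ν)
      atTop (𝓝 0) := by
  have hKt : ∀ t, MemLp (K t) 2 μ := fun t =>
    .of_bound (hK.comp measurable_prodMk_left).aestronglyMeasurable M (ae_of_all _ (hKM t))
  have hpair : ∀ φ (hφ : MemLp φ 2 μ) t,
      ∫ s, K t s * φ s ∂μ = ⟪(hKt t).toLp (K t), hφ.toLp φ⟫_ℝ := by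
    intro φ hφ t
    rw [MemLp.inner_toLp_eq_integral]
    refine integral_congr_ae ?_
    filter_upwards [hφ.coeFn_toLp] with s hs
    rw [hs]
  obtain ⟨C, hC⟩ := exists_norm_le_of_tendsto_inner (𝕜 := ℝ)
    (u := fun n => (hf n).toLp (f n)) (v := hg.toLp g) fun w => by
      simpa only [MemLp.inner_toLp_eq_integral] using hweak w (Lp.memLp w)
  set D := (measureUnivNNReal μ ^ (2 : ℝ≥0∞).toReal⁻¹ * max M 0 : ℝ) * (C + ‖hg.toLp g‖)
  have hbound : ∀ n t, |∫ s, K t s * f n s ∂μ - ∫ s, K t s * g s ∂μ| ≤ D := by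
    intro n t
    rw [hpair _ (hf n), hpair _ hg, ← inner_sub_right]
    refine (abs_real_inner_le_norm _ _).trans (mul_le_mul ?_ ?_ (norm_nonneg _) ?_)
    · exact Lp.norm_le_of_ae_bound (le_max_right M 0) <| by
        filter_upwards [(hKt t).coeFn_toLp] with s hs
        exact hs ▸ (hKM t s).trans (le_max_left M 0)
    · exact (norm_sub_le _ _).trans (by gcongr; exact hC n)
    · positivity
  have hlim : ∀ t, Tendsto (fun n => ∫ s, K t s * f n s ∂μ - ∫ s, K t s * g s ∂μ)
      atTop (𝓝 0) := by
    intro t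
    simpa only [mul_comm, sub_self] using (hweak (K t) (hKt t)).sub_const (∫ s, g s * K t s ∂μ)
  have hmeas : ∀ φ, AEStronglyMeasurable φ μ →
      AEStronglyMeasurable (fun t => ∫ s, K t s * φ s ∂μ) ν := fun φ hφ =>
    (hK.aestronglyMeasurable.mul hφ.comp_snd).integral_prod_right'
  simpa only [integral_zero] using tendsto_integral_filter_of_norm_le_const
    (F := fun n t => |∫ s, K t s * f n s ∂μ - ∫ s, K t s * g s ∂μ| ^ 2) (f := fun _ => 0)
    (Eventually.of_forall fun n =>
      (continuous_abs.pow 2).comp_aestronglyMeasurable ((hmeas _ (hf n).1).sub (hmeas _ hg.1)))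
    ⟨D ^ 2, Eventually.of_forall fun n => ae_of_all _ fun t => by
      rw [Real.norm_eq_abs, abs_pow, abs_abs]
      exact pow_le_pow_left₀ (abs_nonneg _) (hbound n t) 2⟩
    (ae_of_all _ fun t => by simpa using (hlim t).abs.pow 2)

end Kernel

theorem hasDerivAt_integral_sub_mul {μ : Measure ℝ} {ψ : ℝ → ℝ} (hψ : ContDiff ℝ 1 ψ)
    (hψc : HasCompactSupport ψ) {f : ℝ → ℝ} (hf : Integrable f μ) (x₀ : ℝ) :
    HasDerivAt (fun x => ∫ s, ψ (x - s) * f s ∂μ) (∫ s, deriv ψ (x₀ - s) * f s ∂μ) x₀ := by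
  have hψ' : Continuous (deriv ψ) := hψ.continuous_deriv le_rfl
  obtain ⟨M, hM⟩ := hψ.continuous.bounded_above_of_compact_support hψc
  obtain ⟨M', hM'⟩ := hψ'.bounded_above_of_compact_support hψc.deriv
  have hmeas : ∀ φ : ℝ → ℝ, Continuous φ → ∀ x,
      AEStronglyMeasurable (fun s => φ (x - s) * f s) μ := fun φ hφ x =>
    (hφ.comp (continuous_const.sub continuous_id)).aestronglyMeasurable.mul hf.1
  refine (hasDerivAt_integral_of_dominated_loc_of_deriv_le
    (F' := fun x s => deriv ψ (x - s) * f s) (bound := fun s => M' * ‖f s‖)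
    univ_mem (Eventually.of_forall (hmeas ψ hψ.continuous)) ?_ (hmeas _ hψ' x₀) ?_
    (hf.norm.const_mul M') ?_).2
  · exact (hf.norm.const_mul M).mono' (hmeas ψ hψ.continuous x₀) <| ae_of_all _ fun s => by
      rw [norm_mul]; gcongr; exact hM _
  · exact ae_of_all _ fun s x _ => by rw [norm_mul]; gcongr; exact hM' _
  · refine ae_of_all _ fun s x _ => ?_
    have hψx := ((hψ.differentiable one_ne_zero) (x - s)).hasDerivAt.comp_sub_const x s
    simpa using hψx.mul_const (f s)

-- `t² / (t² - ε²) = 1 - 1 / (1 - (t / ε)²)`, so `ρ_ε` is a rescaled standard bump function.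
theorem rho_eq_expNegInvGlue (c : ℝ) {ε : ℝ} (hε : 0 < ε) :
    rho c ε = fun t => c / ε * Real.exp 1 * expNegInvGlue (1 - (t / ε) ^ 2) := by
  ext t
  rw [rho, div_pow]
  split_ifs with ht
  · have hlt : t ^ 2 < ε ^ 2 := sq_lt_sq' (abs_lt.1 ht).1 (abs_lt.1 ht).2
    have hpos : 0 < 1 - t ^ 2 / ε ^ 2 := by rw [sub_pos, div_lt_one (by positivity)]; exact hlt
    rw [expNegInvGlue, if_neg hpos.not_ge, mul_assoc, ← Real.exp_add]
    have hne : ε ^ 2 - t ^ 2 ≠ 0 := (sub_pos.2 hlt).ne'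
    congr 2
    rw [one_sub_div (by positivity), inv_div, show t ^ 2 - ε ^ 2 = -(ε ^ 2 - t ^ 2) by ring]
    field_simp
    ring
  · have hle : ε ^ 2 ≤ t ^ 2 := sq_abs t ▸ pow_le_pow_left₀ hε.le (not_lt.1 ht) 2
    rw [expNegInvGlue.zero_of_nonpos (by rwa [sub_nonpos, one_le_div (by positivity)]), mul_zero]

theorem contDiff_rho (c : ℝ) {ε : ℝ} (hε : 0 < ε) {n : ℕ∞} : ContDiff ℝ n (rho c ε) := by
  rw [rho_eq_expNegInvGlue c hε]
  exact contDiff_const.mul (expNegInvGlue.contDiff.comp (by fun_prop))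

theorem hasCompactSupport_rho (c ε : ℝ) : HasCompactSupport (rho c ε) :=
  HasCompactSupport.intro (isCompact_closedBall 0 ε) fun t ht => by
    rw [Metric.mem_closedBall, dist_zero_right, Real.norm_eq_abs, not_le] at ht
    simp [rho, ht.le.not_gt]

theorem bgam_eq_setIntegral (c ε : ℝ) {T : ℝ} (hT : 0 ≤ T) (f : ℝ → ℝ) :
    bgam c ε T f = fun t => ∫ s in Ioo (-T) T, rho c ε (t - ε - s) * f s := by
  ext t
  rw [bgam, intervalIntegral.integral_of_le (by linarith), integral_Ioc_eq_integral_Ioo]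

theorem deriv_bgam (c : ℝ) {ε T : ℝ} (hε : 0 < ε) (hT : 0 ≤ T) {f : ℝ → ℝ}
    (hf : IntegrableOn f (Ioo (-T) T)) :
    deriv (bgam c ε T f) = fun t => ∫ s in Ioo (-T) T, deriv (rho c ε) (t - ε - s) * f s := by
  ext t
  rw [bgam_eq_setIntegral c ε hT]
  exact ((hasDerivAt_integral_sub_mul (contDiff_rho c hε) (hasCompactSupport_rho c ε) hf
    (t - ε)).comp_sub_const t ε).deriv

theorem stmt_7_general (c : ℝ) (T ε : ℝ) (hT : 0 < T) (hε : 0 < ε)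
    (γn : ℕ → ℝ → ℝ) (γ : ℝ → ℝ)
    (hmem : ∀ n, MemLp (γn n) 2 (volume.restrict (Set.Ioo (-T) T)))
    (hγ : MemLp γ 2 (volume.restrict (Set.Ioo (-T) T)))
    (hweak : ∀ g : ℝ → ℝ, MemLp g 2 (volume.restrict (Set.Ioo (-T) T)) →
      Tendsto (fun n => ∫ s in (-T)..T, γn n s * g s) atTop
        (nhds (∫ s in (-T)..T, γ s * g s))) :
    Tendsto (fun n => ∫ t in (0 : ℝ)..T, |bgam c ε T (γn n) t - bgam c ε T γ t| ^ 2)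
      atTop (nhds 0) ∧
    Tendsto (fun n =>
        ∫ t in (0 : ℝ)..T, |deriv (bgam c ε T (γn n)) t - deriv (bgam c ε T γ) t| ^ 2)
      atTop (nhds 0) := by
  have hweak' : ∀ g, MemLp g 2 (volume.restrict (Ioo (-T) T)) →
      Tendsto (fun n => ∫ s in Ioo (-T) T, γn n s * g s) atTop
        (𝓝 (∫ s in Ioo (-T) T, γ s * g s)) := fun g hg => by
    simpa only [intervalIntegral.integral_of_le (neg_le_self hT.le),
      integral_Ioc_eq_integral_Ioo] using hweak g hg
  have hkernel : ∀ ψ : ℝ → ℝ, Continuous ψ → HasCompactSupport ψ →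
      Tendsto (fun n => ∫ t in (0 : ℝ)..T, |(∫ s in Ioo (-T) T, ψ (t - ε - s) * γn n s)
        - ∫ s in Ioo (-T) T, ψ (t - ε - s) * γ s| ^ 2) atTop (𝓝 0) := by
    intro ψ hψ hψc
    obtain ⟨M, hM⟩ := hψ.bounded_above_of_compact_support hψc
    simp_rw [intervalIntegral.integral_of_le hT.le]
    have hK : Measurable (uncurry fun t s => ψ (t - ε - s)) :=
      (hψ.comp ((continuous_fst.sub continuous_const).sub continuous_snd)).measurable
    have hKM : ∀ t s, |ψ (t - ε - s)| ≤ M := fun t s => hM _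
    exact tendsto_integral_sq_integral_kernel_mul_sub hK hKM hmem hγ hweak'
  refine ⟨?_, ?_⟩
  · simpa only [bgam_eq_setIntegral c ε hT.le] using
      hkernel _ (contDiff_rho c hε (n := 0)).continuous (hasCompactSupport_rho c ε)
  · simpa only [deriv_bgam c hε hT.le ((hmem _).integrable one_le_two),
      deriv_bgam c hε hT.le (hγ.integrable one_le_two)] using
      hkernel _ ((contDiff_rho c hε (n := 1)).continuous_deriv le_rfl)
        (hasCompactSupport_rho c ε).deriv

/-- If `(γ_n)` converges weakly to `γ` in `L²((−T,T);ℝ)`, then `b_{γ_n} → b_γ` strongly in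
`L²((0,T))`, i.e. `∫_0^T |b_{γ_n}(t) − b_γ(t)|² dt → 0`, and moreover the derivatives also
converge: `∫_0^T |b_{γ_n}′(t) − b_γ′(t)|² dt → 0`. -/
theorem stmt_7 (c : ℝ) (hc : 0 < c) (T ε : ℝ) (hT : 0 < T) (hε : 0 < ε)
    (γn : ℕ → ℝ → ℝ) (γ : ℝ → ℝ)
    (hmem : ∀ n, MemLp (γn n) 2 (volume.restrict (Set.Ioo (-T) T)))
    (hγ : MemLp γ 2 (volume.restrict (Set.Ioo (-T) T)))
    (hweak : ∀ g : ℝ → ℝ, MemLp g 2 (volume.restrict (Set.Ioo (-T) T)) →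
      Tendsto (fun n => ∫ s in (-T)..T, γn n s * g s) atTop
        (nhds (∫ s in (-T)..T, γ s * g s))) :
    Tendsto (fun n => ∫ t in (0 : ℝ)..T, |bgam c ε T (γn n) t - bgam c ε T γ t| ^ 2)
      atTop (nhds 0) ∧
    Tendsto (fun n =>
        ∫ t in (0 : ℝ)..T, |deriv (bgam c ε T (γn n)) t - deriv (bgam c ε T γ) t| ^ 2)
      atTop (nhds 0) :=
  stmt_7_general c T ε hT hε γn γ hmem hγ hweak
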